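/- arXiv:2507.10515 — 2 statements merged into one kernel-verified Lean document; each statement's English description precedes it below -/
import Mathlib

section
/- Let W ⊂ ℝ^d be compact and convex, and fix ε ∈ (0,1). Then there exists δ ∈ (0,ε) such that for any set E ⊆ ℝ^d with (1−δ)W ⊆ conv(E) ⊆ (1+δ)W, every extreme point ξ of W satisfies B(ξ, ε) ∩ E ≠ ∅. -/
open scoped Pointwise
open Set Filter Topology

private lemma sum_dite_fin {α : Type*} {M : Type*} [AddCommMonoid M] (n : ℕ) (t : Finset α)
    (hcard : t.card ≤ n) (f : α → M) :
    (∑ i : Fin n, if h : (i : ℕ) < t.card then f (t.equivFin.symm ⟨(i : ℕ), h⟩ : α) else 0)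
      = ∑ y ∈ t, f y := by
  have h1 : (∑ i : Fin n, if h : (i : ℕ) < t.card then f (t.equivFin.symm ⟨(i : ℕ), h⟩ : α) else 0)
      = ∑ i ∈ Finset.range n, if h : i < t.card then f (t.equivFin.symm ⟨i, h⟩ : α) else 0 :=
    Fin.sum_univ_eq_sum_range
      (fun m => if h : m < t.card then f (t.equivFin.symm ⟨m, h⟩ : α) else 0) n
  rw [h1, ← Finset.sum_subset (Finset.range_subset_range.2 hcard)
    (fun i _ hi => dif_neg (by simpa using hi))]
  rw [← Fin.sum_univ_eq_sum_range]
  have h2 : ∀ i : Fin t.card,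
      (if h : (i : ℕ) < t.card then f (t.equivFin.symm ⟨(i : ℕ), h⟩ : α) else 0)
        = f (t.equivFin.symm i : α) := fun i => dif_pos i.isLt
  rw [Finset.sum_congr rfl fun i _ => h2 i,
    Equiv.sum_comp t.equivFin.symm (fun y : t => f (y : α))]
  exact Finset.sum_coe_sort t f

private lemma isCompact_convexHull' {E : Type*} [NormedAddCommGroup E] [NormedSpace ℝ E]
    [FiniteDimensional ℝ E] {s : Set E} (hs : IsCompact s) : IsCompact (convexHull ℝ s) := by
  rcases s.eq_empty_or_nonempty with rfl | ⟨s₀, hs₀⟩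
  · rw [convexHull_empty]; exact isCompact_empty
  set n := Module.finrank ℝ E + 1 with hn
  have main : convexHull ℝ s =
      (fun p : (Fin n → ℝ) × (Fin n → E) => ∑ i, p.1 i • p.2 i) ''
        (stdSimplex ℝ (Fin n) ×ˢ Set.univ.pi fun _ : Fin n => s) := by
    apply Set.Subset.antisymm
    · intro x hx
      rw [convexHull_eq_union] at hx
      simp only [Set.mem_iUnion] at hx
      obtain ⟨t, hts, hti, hxt⟩ := hx
      have hcard : t.card ≤ n := by
        have h1 := hti.card_le_finrank_succ
        have h2 : Module.finrank ℝ (vectorSpan ℝ (Set.range ((↑) : t → E)))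
            ≤ Module.finrank ℝ E := Submodule.finrank_le _
        rw [Fintype.card_coe] at h1
        omega
      rw [Finset.convexHull_eq] at hxt
      obtain ⟨w, hw0, hw1, hwx⟩ := hxt
      rw [Finset.centerMass_eq_of_sum_1 _ _ hw1] at hwx
      refine ⟨⟨fun i => if h : (i : ℕ) < t.card then w (t.equivFin.symm ⟨(i : ℕ), h⟩ : E) else 0,
        fun i => if h : (i : ℕ) < t.card then (t.equivFin.symm ⟨(i : ℕ), h⟩ : E) else s₀⟩,
        ⟨⟨?_, ?_⟩, ?_⟩, ?_⟩
      · intro i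
        dsimp only
        split_ifs with h
        · exact hw0 _ (Finset.coe_mem _)
        · exact le_refl 0
      · simpa using (sum_dite_fin n t hcard w).trans hw1
      · intro i _
        dsimp only
        split_ifs with h
        · exact hts (Finset.coe_mem _)
        · exact hs₀
      · dsimp only
        have h3 : ∀ i : Fin n,
            (if h : (i : ℕ) < t.card then w (t.equivFin.symm ⟨(i : ℕ), h⟩ : E) else 0) •
              (if h : (i : ℕ) < t.card then (t.equivFin.symm ⟨(i : ℕ), h⟩ : E) else s₀)
            = if h : (i : ℕ) < t.card then
                w (t.equivFin.symm ⟨(i : ℕ), h⟩ : E) • (t.equivFin.symm ⟨(i : ℕ), h⟩ : E)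
              else 0 := by
          intro i
          split_ifs with h
          · rfl
          · exact zero_smul _ _
        rw [Finset.sum_congr rfl fun i _ => h3 i, sum_dite_fin n t hcard (fun y => w y • y)]
        simpa [id] using hwx
    · rintro x ⟨⟨w, z⟩, ⟨⟨hw0, hw1⟩, hz⟩, rfl⟩
      exact (convex_convexHull ℝ s).sum_mem (fun i _ => hw0 i) hw1
        (fun i _ => subset_convexHull ℝ s (hz i (Set.mem_univ i)))
  rw [main]
  exact ((isCompact_stdSimplex (𝕜 := ℝ) (ι := Fin n)).prod (isCompact_univ_pi fun _ => hs)).image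
    (continuous_finset_sum _ fun i _ =>
      ((continuous_apply i).comp continuous_fst).smul ((continuous_apply i).comp continuous_snd))

private lemma key_lemma {d : ℕ} {W : Set (EuclideanSpace ℝ (Fin d))}
    (hWc : IsCompact W) (hWconv : Convex ℝ W) {r : ℝ} (hr : 0 < r) :
    ∃ η : ℝ, 0 < η ∧ ∀ θ : ℝ, 0 < θ → θ ≤ η → ∀ ξ ∈ Set.extremePoints ℝ W,
      ¬ ((1 - θ) • W ⊆ convexHull ℝ (W \ Metric.ball ξ r)) := by
  by_contra hcon
  push_neg at hcon
  have h' : ∀ n : ℕ, ∃ θ : ℝ, 0 < θ ∧ θ ≤ 1 / (n + 1) ∧ ∃ ξ ∈ Set.extremePoints ℝ W,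
      (1 - θ) • W ⊆ convexHull ℝ (W \ Metric.ball ξ r) := by
    intro n
    obtain ⟨θ, h1, h2, ξ, h3, h4⟩ := hcon (1 / (n + 1)) (by positivity)
    exact ⟨θ, h1, h2, ξ, h3, h4⟩
  choose θ hθ0 hθle ξ hξe hsub using h'
  have hξW : ∀ n, ξ n ∈ W := fun n => (hξe n).1
  obtain ⟨ζ, hζW, φ, hφ, hlim⟩ := hWc.tendsto_subseq hξW
  have hev : ∀ᶠ n in atTop, ξ (φ n) ∈ Metric.ball ζ (r / 2) :=
    hlim (Metric.ball_mem_nhds ζ (by positivity))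
  set K := W \ Metric.ball ζ (r / 2) with hK
  have hKc : IsCompact K := hWc.diff Metric.isOpen_ball
  have hCc : IsCompact (convexHull ℝ K) := isCompact_convexHull' hKc
  have hWsub : W ⊆ convexHull ℝ K := by
    intro w hw
    have hb : ∀ n : ℕ, θ (φ n) ≤ 1 / ((n : ℝ) + 1) := by
      intro n
      refine (hθle (φ n)).trans ?_
      have hle : (n : ℝ) + 1 ≤ (φ n : ℝ) + 1 := by
        exact_mod_cast Nat.succ_le_succ hφ.le_apply
      exact one_div_le_one_div_of_le (by positivity) hle
    have hθt : Tendsto (fun n => θ (φ n)) atTop (𝓝 0) :=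
      squeeze_zero (fun n => (hθ0 _).le) hb tendsto_one_div_add_atTop_nhds_zero_nat
    have htend : Tendsto (fun n => (1 - θ (φ n)) • w) atTop (𝓝 w) := by
      have h1 : Tendsto (fun n => (1 - θ (φ n))) atTop (𝓝 1) := by
        simpa using tendsto_const_nhds.sub hθt
      simpa using h1.smul_const w
    refine hCc.isClosed.mem_of_tendsto htend ?_
    filter_upwards [hev] with n hn
    have hsub2 : W \ Metric.ball (ξ (φ n)) r ⊆ K := by
      intro y hy
      refine ⟨hy.1, fun hy2 => hy.2 ?_⟩
      rw [Metric.mem_ball] at hy2 hn ⊢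
      calc dist y (ξ (φ n)) ≤ dist y ζ + dist ζ (ξ (φ n)) := dist_triangle _ _ _
        _ < r / 2 + r / 2 := by rw [dist_comm ζ]; linarith
        _ = r := by ring
    exact convexHull_mono hsub2 (hsub (φ n) (Set.smul_mem_smul_set hw))
  have hWeq : W = convexHull ℝ K :=
    Set.Subset.antisymm hWsub
      ((convexHull_mono Set.diff_subset).trans hWconv.convexHull_eq.subset)
  have hext : Set.extremePoints ℝ W ⊆ K := by
    rw [hWeq]
    exact extremePoints_convexHull_subset
  obtain ⟨n, hn⟩ := hev.exists
  exact (hext (hξe (φ n))).2 hn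

/-- Let `W ⊂ ℝ^d` be compact and convex and `ε ∈ (0,1)`. There exists `δ ∈ (0,ε)` such
that for any set `E` with `(1-δ)W ⊆ conv(E) ⊆ (1+δ)W`, every extreme point `ξ` of `W`
satisfies `B(ξ,ε) ∩ E ≠ ∅`. -/
theorem extreme_points_approximated (d : ℕ) (W : Set (EuclideanSpace ℝ (Fin d)))
    (hWc : IsCompact W) (hWconv : Convex ℝ W)
    (ε : ℝ) (hε : 0 < ε) (hε1 : ε < 1) :
    ∃ δ : ℝ, 0 < δ ∧ δ < ε ∧
      ∀ E : Set (EuclideanSpace ℝ (Fin d)),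
        (1 - δ) • W ⊆ convexHull ℝ E → convexHull ℝ E ⊆ (1 + δ) • W →
        ∀ ξ ∈ Set.extremePoints ℝ W, (Metric.ball ξ ε ∩ E).Nonempty := by
  obtain ⟨R₀, hR₀⟩ := hWc.isBounded.subset_closedBall 0
  set R := max R₀ 1 with hRdef
  have hR1 : 0 < R := lt_of_lt_of_le one_pos (le_max_right _ _)
  have hR : ∀ w ∈ W, ‖w‖ ≤ R := by
    intro w hw
    have := hR₀ hw
    rw [Metric.mem_closedBall, dist_zero_right] at this
    exact this.trans (le_max_left _ _)
  obtain ⟨η, hη0, hkey⟩ := key_lemma hWc hWconv (show (0 : ℝ) < ε / 2 by positivity)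
  set δ := min (η / 2) (min (ε / (2 * R)) (ε / 2)) with hδdef
  have hδ0 : 0 < δ := by positivity
  have hδη : δ ≤ η / 2 := min_le_left _ _
  have hδR : δ ≤ ε / (2 * R) := (min_le_right _ _).trans (min_le_left _ _)
  have hδε2 : δ ≤ ε / 2 := (min_le_right _ _).trans (min_le_right _ _)
  refine ⟨δ, hδ0, by linarith, ?_⟩
  intro E hE1 hE2 ξ hξ
  by_contra hne
  rw [Set.not_nonempty_iff_eq_empty] at hne
  have hEsub : E ⊆ (1 + δ) • (W \ Metric.ball ξ (ε / 2)) := by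
    intro e he
    obtain ⟨w, hwW, rfl⟩ := hE2 (subset_convexHull ℝ E he)
    refine Set.smul_mem_smul_set ⟨hwW, fun hwb => ?_⟩
    have h1 : dist ((1 + δ) • w) w = δ * ‖w‖ := by
      rw [dist_eq_norm]
      have h2 : (1 + δ) • w - w = δ • w := by
        rw [add_smul, one_smul]; abel
      rw [h2, norm_smul, Real.norm_eq_abs, abs_of_pos hδ0]
    have hball : (1 + δ) • w ∈ Metric.ball ξ ε := by
      rw [Metric.mem_ball] at hwb ⊢
      have h3 : δ * ‖w‖ ≤ ε / 2 := by
        have h4 : δ * ‖w‖ ≤ δ * R := by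
          apply mul_le_mul_of_nonneg_left (hR w hwW) hδ0.le
        have h5 : δ * R ≤ (ε / (2 * R)) * R := mul_le_mul_of_nonneg_right hδR hR1.le
        have h6 : (ε / (2 * R)) * R = ε / 2 := by field_simp
        linarith
      calc dist ((1 + δ) • w) ξ ≤ dist ((1 + δ) • w) w + dist w ξ := dist_triangle _ _ _
        _ < ε / 2 + ε / 2 := by rw [h1]; linarith
        _ = ε := by ring
    exact Set.eq_empty_iff_forall_notMem.1 hne ((1 + δ) • w) ⟨hball, he⟩
  have hconvsub : convexHull ℝ E ⊆ (1 + δ) • convexHull ℝ (W \ Metric.ball ξ (ε / 2)) :=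
    (convexHull_mono hEsub).trans (by rw [convexHull_smul])
  have h1δ : (0 : ℝ) < 1 + δ := by linarith
  have hfinal : (1 - 2 * δ / (1 + δ)) • W ⊆ convexHull ℝ (W \ Metric.ball ξ (ε / 2)) := by
    intro x hx
    obtain ⟨w, hw, rfl⟩ := hx
    have hin : (1 - δ) • w ∈ (1 + δ) • convexHull ℝ (W \ Metric.ball ξ (ε / 2)) :=
      hconvsub (hE1 (Set.smul_mem_smul_set hw))
    obtain ⟨c, hc, hce⟩ := hin
    have hce' : (1 + δ) • c = (1 - δ) • w := hce
    have h7 : c = ((1 + δ)⁻¹ * (1 - δ)) • w := by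
      have h9 := congrArg (fun y => (1 + δ)⁻¹ • y) hce'
      simp only [smul_smul] at h9
      rw [inv_mul_cancel₀ h1δ.ne', one_smul] at h9
      exact h9
    have h8 : (1 : ℝ) - 2 * δ / (1 + δ) = (1 + δ)⁻¹ * (1 - δ) := by
      field_simp
      ring
    have hcw : (1 - 2 * δ / (1 + δ)) • w = c := by rw [h7, h8]
    show (1 - 2 * δ / (1 + δ)) • w ∈ _
    exact hcw ▸ hc
  have hθ0' : 0 < 2 * δ / (1 + δ) := by positivity
  have hθη : 2 * δ / (1 + δ) ≤ η := by
    rw [div_le_iff₀ h1δ]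
    nlinarith
  exact hkey _ hθ0' hθη ξ hξ hfinal
end

section
/- Let c : S^{d-1} → (a, a^{-1}) for some a ∈ (0,1), and define the Wulff shape W(c) = ⋂_{e ∈ S^{d-1}} {x ∈ ℝ^d : x·e ≤ c(e)}. Then for every ε ∈ (0,1) there exists a finite set R ⊂ S^{d-1} such that ⋂_{r ∈ R} {x : x·r ≤ c(r)} ⊆ (1+ε) W(c). -/
/-!
Since `c ≥ a > 0`, the open `εa`-neighbourhood of `W(c)` lies in `(1 + ε) W(c)`. The half-spaces
with normals `±bᵢ`, for an orthonormal basis `b`, cut out a bounded polytope `P₀`. On the compact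
set `closure P₀` minus that neighbourhood the closed half-spaces defining `W(c)` have empty common
intersection, so finitely many of them already do.
-/

open scoped Pointwise RealInnerProductSpace
open Metric Set

theorem IsCompact.exists_finset_inter_biInter_subset {X ι : Type*} [TopologicalSpace X]
    {K O : Set X} (hK : IsCompact K) (hO : IsOpen O) (H : ι → Set X)
    (hH : ∀ i, IsClosed (H i)) (hKO : K ∩ ⋂ i, H i ⊆ O) :
    ∃ t : Finset ι, K ∩ ⋂ i ∈ t, H i ⊆ O := by
  obtain ⟨t, ht⟩ := (hK.diff hO).elim_finite_subfamily_closed H hH <| by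
    rw [eq_empty_iff_forall_notMem]
    exact fun x ⟨⟨hxK, hxO⟩, hxH⟩ => hxO (hKO ⟨hxK, hxH⟩)
  refine ⟨t, fun x ⟨hxK, hxH⟩ => ?_⟩
  by_contra hxO
  exact (eq_empty_iff_forall_notMem.1 ht) x ⟨⟨hxK, hxO⟩, hxH⟩

section InnerProductSpace

variable {E : Type*} [NormedAddCommGroup E] [InnerProductSpace ℝ E]

def wulffShape (c : sphere (0 : E) 1 → ℝ) : Set E :=
  {x | ∀ e : sphere (0 : E) 1, ⟪x, (e : E)⟫ ≤ c e}

theorem thickening_wulffShape_subset_smul {c : sphere (0 : E) 1 → ℝ} {a ε : ℝ}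
    (hc : ∀ e, a ≤ c e) (hε : 0 ≤ ε) :
    thickening (ε * a) (wulffShape c) ⊆ (1 + ε) • wulffShape c := by
  intro y hy
  obtain ⟨x, hx, hxy⟩ := mem_thickening_iff.1 hy
  rw [mem_smul_set_iff_inv_smul_mem₀ (by positivity)]
  intro e
  have hdev : ⟪y - x, (e : E)⟫ ≤ ε * a :=
    calc ⟪y - x, (e : E)⟫ ≤ ‖y - x‖ * ‖(e : E)‖ := real_inner_le_norm _ _
      _ = dist y x := by rw [norm_eq_of_mem_sphere e, mul_one, dist_eq_norm]
      _ ≤ ε * a := hxy.le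
  rw [real_inner_smul_left, inv_mul_le_iff₀ (by positivity)]
  calc ⟪y, (e : E)⟫ = ⟪x, (e : E)⟫ + ⟪y - x, (e : E)⟫ := by
        rw [← inner_add_left, add_sub_cancel]
    _ ≤ c e + ε * c e := add_le_add (hx e) (hdev.trans (mul_le_mul_of_nonneg_left (hc e) hε))
    _ = (1 + ε) * c e := by ring

theorem OrthonormalBasis.norm_le_sum_of_abs_inner_le {ι : Type*} [Fintype ι]
    (b : OrthonormalBasis ι ℝ E) {x : E} {C : ι → ℝ} (h : ∀ i, |⟪b i, x⟫| ≤ C i) :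
    ‖x‖ ≤ ∑ i, C i :=
  calc ‖x‖ = ‖∑ i, ⟪b i, x⟫ • b i‖ := by rw [b.sum_repr']
    _ ≤ ∑ i, ‖⟪b i, x⟫ • b i‖ := norm_sum_le _ _
    _ = ∑ i, |⟪b i, x⟫| := by simp only [norm_smul, b.norm_eq_one, mul_one, Real.norm_eq_abs]
    _ ≤ ∑ i, C i := Finset.sum_le_sum fun i _ => h i

theorem exists_finset_isBounded_halfspaces [FiniteDimensional ℝ E] (c : sphere (0 : E) 1 → ℝ) :
    ∃ R₀ : Finset (sphere (0 : E) 1),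
      Bornology.IsBounded {x : E | ∀ r ∈ R₀, ⟪x, (r : E)⟫ ≤ c r} := by
  classical
  let b := stdOrthonormalBasis ℝ E
  let pos : _ → sphere (0 : E) 1 := fun i => ⟨b i, by simp [b.norm_eq_one]⟩
  let neg : _ → sphere (0 : E) 1 := fun i => ⟨-b i, by simp [b.norm_eq_one]⟩
  refine ⟨Finset.univ.image pos ∪ Finset.univ.image neg, ?_⟩
  refine (isBounded_iff_subset_closedBall 0).2
    ⟨∑ i, (|c (pos i)| + |c (neg i)|), fun x hx => mem_closedBall_zero_iff.2 ?_⟩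
  refine b.norm_le_sum_of_abs_inner_le fun i => abs_le.2 ⟨?_, ?_⟩
  · have h := hx (neg i) (by simp)
    simp only [neg, inner_neg_right, real_inner_comm (b i) x] at h
    linarith [le_abs_self (c (neg i)), abs_nonneg (c (pos i))]
  · have h := hx (pos i) (by simp)
    simp only [pos, real_inner_comm (b i) x] at h
    linarith [le_abs_self (c (pos i)), abs_nonneg (c (neg i))]

theorem exists_finset_halfspaces_subset_smul_wulffShape [FiniteDimensional ℝ E]
    {c : sphere (0 : E) 1 → ℝ} {a ε : ℝ} (ha : 0 < a) (hc : ∀ e, a ≤ c e) (hε : 0 < ε) :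
    ∃ R : Finset (sphere (0 : E) 1),
      {x : E | ∀ r ∈ R, ⟪x, (r : E)⟫ ≤ c r} ⊆ (1 + ε) • wulffShape c := by
  classical
  obtain ⟨R₀, hR₀⟩ := exists_finset_isBounded_halfspaces c
  have hclosed (e : sphere (0 : E) 1) : IsClosed {x : E | ⟪x, (e : E)⟫ ≤ c e} :=
    isClosed_le (continuous_id.inner continuous_const) continuous_const
  have hopen : IsOpen (thickening (ε * a) (wulffShape c)) := isOpen_thickening
  obtain ⟨t, ht⟩ := hR₀.isCompact_closure.exists_finset_inter_biInter_subset hopen _ hclosed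
    fun x hx => self_subset_thickening (by positivity) _ (mem_iInter.1 hx.2)
  refine ⟨R₀ ∪ t, fun x hx => thickening_wulffShape_subset_smul hc hε.le (ht ⟨?_, ?_⟩)⟩
  · exact subset_closure fun r hr => hx r (Finset.mem_union_left _ hr)
  · exact mem_iInter₂.2 fun r hr => hx r (Finset.mem_union_right _ hr)

end InnerProductSpace

theorem wulff_outer_approx_general (d : ℕ) (a : ℝ) (ha : 0 < a)
    (c : Metric.sphere (0 : EuclideanSpace ℝ (Fin d)) 1 → ℝ)
    (hc : ∀ e, a < c e ∧ c e < a⁻¹)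
    (ε : ℝ) (hε : 0 < ε) :
    ∃ R : Finset (Metric.sphere (0 : EuclideanSpace ℝ (Fin d)) 1),
      {x : EuclideanSpace ℝ (Fin d) | ∀ r ∈ R, ⟪x, (r : EuclideanSpace ℝ (Fin d))⟫ ≤ c r}
        ⊆ (1 + ε) •
          {x : EuclideanSpace ℝ (Fin d) |
            ∀ e : Metric.sphere (0 : EuclideanSpace ℝ (Fin d)) 1,
              ⟪x, (e : EuclideanSpace ℝ (Fin d))⟫ ≤ c e} :=
  exists_finset_halfspaces_subset_smul_wulffShape ha (fun e => (hc e).1.le) hε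

/-- Outer approximation of Wulff shapes by finitely many half-spaces: if
`c : S^{d-1} → (a, a⁻¹)` with `a ∈ (0,1)` and `W(c)` is the associated Wulff shape,
then for every `ε ∈ (0,1)` there is a finite set `R` of unit vectors with
`⋂_{r ∈ R} {x : x·r ≤ c r} ⊆ (1+ε) W(c)`. -/
theorem wulff_outer_approx (d : ℕ) (a : ℝ) (ha : 0 < a) (ha1 : a < 1)
    (c : Metric.sphere (0 : EuclideanSpace ℝ (Fin d)) 1 → ℝ)
    (hc : ∀ e, a < c e ∧ c e < a⁻¹)
    (ε : ℝ) (hε : 0 < ε) (hε1 : ε < 1) :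
    ∃ R : Finset (Metric.sphere (0 : EuclideanSpace ℝ (Fin d)) 1),
      {x : EuclideanSpace ℝ (Fin d) | ∀ r ∈ R, ⟪x, (r : EuclideanSpace ℝ (Fin d))⟫ ≤ c r}
        ⊆ (1 + ε) •
          {x : EuclideanSpace ℝ (Fin d) |
            ∀ e : Metric.sphere (0 : EuclideanSpace ℝ (Fin d)) 1,
              ⟪x, (e : EuclideanSpace ℝ (Fin d))⟫ ≤ c e} :=
  wulff_outer_approx_general d a ha c hc ε hε
end
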